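/- Let 1 ≤ p < ∞, α > 1, and suppose g is analytic on 𝔻 with (1−|z|)|g(z)| → 0 as |z| → 1. Then the operator W_g f(z) = g(z)∫_0^z f(ζ)dζ maps H(p,∞,α) into H_0(p,∞,α); i.e., for every f with sup_r (1−r)^α M_p(r,f) < ∞, one has (1−r)^α M_p(r, W_g f) → 0 as r → 1. -/

import Mathlib

open Complex Metric Set Filter MeasureTheory

noncomputable def Mp (p r : ℝ) (f : ℂ → ℂ) : ℝ :=
  ((1 / (2 * Real.pi)) * ∫ θ in (0:ℝ)..(2 * Real.pi),
    ‖f ((r : ℂ) * Complex.exp (θ * Complex.I))‖ ^ p) ^ (1 / p)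

lemma Mp_nonneg (p r : ℝ) (f : ℂ → ℂ) : 0 ≤ Mp p r f :=
  Real.rpow_nonneg (mul_nonneg (by positivity)
    (intervalIntegral.integral_nonneg Real.two_pi_pos.le
      (fun θ _ => Real.rpow_nonneg (norm_nonneg _) p))) _

lemma jensen_aux {p : ℝ} (hp1 : 1 ≤ p) {u w : ℝ → ℝ}
    (hu : ContinuousOn u (Set.Ioc (0:ℝ) 1)) (hw : ContinuousOn w (Set.Ioc (0:ℝ) 1))
    (hu0 : ∀ t ∈ Set.Ioc (0:ℝ) 1, 0 ≤ u t) (hw0 : ∀ t ∈ Set.Ioc (0:ℝ) 1, 0 < w t)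
    {C : ℝ} (huC : ∀ t ∈ Set.Ioc (0:ℝ) 1, u t ≤ C) (hwC : ∀ t ∈ Set.Ioc (0:ℝ) 1, w t ≤ C) :
    (∫ t in Set.Ioc (0:ℝ) 1, u t * w t) ^ p ≤
      (∫ t in Set.Ioc (0:ℝ) 1, w t) ^ (p - 1) * ∫ t in Set.Ioc (0:ℝ) 1, u t ^ p * w t := by
  haveI : IsFiniteMeasure (volume.restrict (Set.Ioc (0:ℝ) 1)) :=
    ⟨by rw [Measure.restrict_apply_univ]; simp [Real.volume_Ioc]⟩
  have hae : ∀ (P : ℝ → Prop), (∀ t ∈ Set.Ioc (0:ℝ) 1, P t) →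
      ∀ᵐ t ∂(volume.restrict (Set.Ioc (0:ℝ) 1)), P t :=
    fun P h => (ae_restrict_iff' measurableSet_Ioc).2 (Eventually.of_forall h)
  rcases eq_or_lt_of_le hp1 with hp1' | hp1'
  · rw [← hp1']
    simp [Real.rpow_one]
  · have hp0 : (0:ℝ) < p := by linarith
    set q := p / (p - 1) with hqdef
    have hpq : p.HolderConjugate q := Real.HolderConjugate.conjExponent hp1'
    have hq0 : (0:ℝ) < q := hpq.symm.pos
    set f₁ : ℝ → ℝ := fun t => u t * w t ^ (1/p) with hf₁
    set g₁ : ℝ → ℝ := fun t => w t ^ (1/q) with hg₁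
    have hf₁m : AEStronglyMeasurable f₁ (volume.restrict (Set.Ioc (0:ℝ) 1)) :=
      ((hu.mul (hw.rpow_const (fun x hx => Or.inl (hw0 x hx).ne'))).aestronglyMeasurable
        measurableSet_Ioc)
    have hg₁m : AEStronglyMeasurable g₁ (volume.restrict (Set.Ioc (0:ℝ) 1)) :=
      ((hw.rpow_const (fun x hx => Or.inl (hw0 x hx).ne')).aestronglyMeasurable
        measurableSet_Ioc)
    have hC1 : (1:ℝ) ≤ max C 1 := le_max_right _ _
    have hwpow : ∀ t ∈ Set.Ioc (0:ℝ) 1, ∀ s : ℝ, 0 < s → s ≤ 1 → w t ^ s ≤ max C 1 := by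
      intro t ht s hs0 hs1
      calc w t ^ s ≤ (max C 1) ^ s :=
            Real.rpow_le_rpow (hw0 t ht).le (le_trans (hwC t ht) (le_max_left _ _)) hs0.le
        _ ≤ (max C 1) ^ (1:ℝ) := Real.rpow_le_rpow_of_exponent_le hC1 hs1
        _ = max C 1 := Real.rpow_one _
    have hs1p : 1/p ≤ 1 := by rw [div_le_one hp0]; exact hp1
    have hs1q : 1/q ≤ 1 := by
      rw [div_le_one hq0, hqdef]; rw [le_div_iff₀ (by linarith)]; nlinarith
    have memf : MemLp f₁ (ENNReal.ofReal p) (volume.restrict (Set.Ioc (0:ℝ) 1)) := by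
      apply MemLp.of_bound hf₁m ((max C 1) * max C 1)
      apply hae; intro t ht
      have h1 : 0 ≤ f₁ t := mul_nonneg (hu0 t ht) (Real.rpow_nonneg (hw0 t ht).le _)
      rw [Real.norm_eq_abs, _root_.abs_of_nonneg h1]
      exact mul_le_mul (le_trans (huC t ht) (le_max_left _ _))
        (hwpow t ht _ (by positivity) hs1p) (Real.rpow_nonneg (hw0 t ht).le _)
        (by positivity)
    have memg : MemLp g₁ (ENNReal.ofReal q) (volume.restrict (Set.Ioc (0:ℝ) 1)) := by
      apply MemLp.of_bound hg₁m (max C 1)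
      apply hae; intro t ht
      rw [Real.norm_eq_abs, _root_.abs_of_nonneg (Real.rpow_nonneg (hw0 t ht).le _)]
      exact hwpow t ht _ (by positivity) hs1q
    have H := integral_mul_le_Lp_mul_Lq_of_nonneg hpq
      (hae _ fun t ht => mul_nonneg (hu0 t ht) (Real.rpow_nonneg (hw0 t ht).le _))
      (hae _ fun t ht => Real.rpow_nonneg (hw0 t ht).le _) memf memg
    have e1 : ∫ t in Set.Ioc (0:ℝ) 1, f₁ t * g₁ t = ∫ t in Set.Ioc (0:ℝ) 1, u t * w t := by
      apply integral_congr_ae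
      apply hae; intro t ht
      rw [hf₁, hg₁]
      simp only
      rw [mul_assoc, ← Real.rpow_add (hw0 t ht), one_div, one_div, hpq.inv_add_inv_eq_one, Real.rpow_one]
    have e2 : ∫ t in Set.Ioc (0:ℝ) 1, f₁ t ^ p = ∫ t in Set.Ioc (0:ℝ) 1, u t ^ p * w t := by
      apply integral_congr_ae
      apply hae; intro t ht
      rw [hf₁]
      simp only
      rw [Real.mul_rpow (hu0 t ht) (Real.rpow_nonneg (hw0 t ht).le _),
        ← Real.rpow_mul (hw0 t ht).le, one_div_mul_cancel hp0.ne', Real.rpow_one]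
    have e3 : ∫ t in Set.Ioc (0:ℝ) 1, g₁ t ^ q = ∫ t in Set.Ioc (0:ℝ) 1, w t := by
      apply integral_congr_ae
      apply hae; intro t ht
      rw [hg₁]
      simp only
      rw [← Real.rpow_mul (hw0 t ht).le, one_div_mul_cancel hq0.ne', Real.rpow_one]
    rw [e1, e2, e3] at H
    have hL : 0 ≤ ∫ t in Set.Ioc (0:ℝ) 1, u t * w t :=
      setIntegral_nonneg measurableSet_Ioc fun t ht => mul_nonneg (hu0 t ht) (hw0 t ht).le
    have hA : 0 ≤ ∫ t in Set.Ioc (0:ℝ) 1, u t ^ p * w t :=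
      setIntegral_nonneg measurableSet_Ioc fun t ht =>
        mul_nonneg (Real.rpow_nonneg (hu0 t ht) _) (hw0 t ht).le
    have hW : 0 ≤ ∫ t in Set.Ioc (0:ℝ) 1, w t :=
      setIntegral_nonneg measurableSet_Ioc fun t ht => (hw0 t ht).le
    have hqp : 1/q * p = p - 1 := by
      rw [hqdef]; field_simp
    calc (∫ t in Set.Ioc (0:ℝ) 1, u t * w t) ^ p
        ≤ ((∫ t in Set.Ioc (0:ℝ) 1, u t ^ p * w t) ^ (1/p) *
            (∫ t in Set.Ioc (0:ℝ) 1, w t) ^ (1/q)) ^ p :=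
          Real.rpow_le_rpow hL H hp0.le
      _ = (∫ t in Set.Ioc (0:ℝ) 1, w t) ^ (p - 1) *
            ∫ t in Set.Ioc (0:ℝ) 1, u t ^ p * w t := by
          rw [Real.mul_rpow (Real.rpow_nonneg hA _) (Real.rpow_nonneg hW _),
            ← Real.rpow_mul hA, ← Real.rpow_mul hW, one_div_mul_cancel hp0.ne',
            Real.rpow_one, hqp, mul_comm]

lemma weight_integral_le {α r : ℝ} (hα : 1 < α) (hr2 : 1/2 ≤ r) (hr1 : r < 1) :
    ∫ t in Set.Ioc (0:ℝ) 1, (1 - t*r) ^ (-α) ≤ 2/(α-1) * (1-r)^(1-α) := by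
  have hr0 : 0 < r := by linarith
  have h1r : 0 < 1 - r := by linarith
  have hbase : ∀ x ∈ Set.Icc (0:ℝ) 1, 0 < 1 - x * r := by
    intro x hx; nlinarith [hx.1, hx.2]
  have hcont : ContinuousOn (fun t : ℝ => (1 - t*r) ^ (-α)) (Set.Icc (0:ℝ) 1) :=
    (ContinuousOn.rpow_const ((continuous_const.sub (continuous_id.mul continuous_const)).continuousOn)
      (fun x hx => Or.inl (hbase x hx).ne'))
  have hderiv : ∀ x ∈ Set.uIcc (0:ℝ) 1,
      HasDerivAt (fun t : ℝ => (1 - t*r) ^ (1-α) / (r*(α-1))) ((1 - x*r) ^ (-α)) x := by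
    intro x hx
    rw [Set.uIcc_of_le zero_le_one] at hx
    have hb := hbase x hx
    have hin : HasDerivAt (fun t : ℝ => 1 - t * r) (-r) x := by
      simpa using ((hasDerivAt_id x).mul_const r).const_sub 1
    have hout : HasDerivAt (fun y : ℝ => y ^ (1-α)) ((1-α) * (1 - x*r) ^ (1-α-1)) (1 - x*r) :=
      Real.hasDerivAt_rpow_const (Or.inl hb.ne')
    have := (hout.comp x hin).div_const (r*(α-1))
    convert! this using 1
    rw [show (1-α-1 : ℝ) = -α by ring]
    have hd' : r * (α - 1) ≠ 0 := ne_of_gt (by nlinarith)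
    rw [eq_div_iff hd']
    ring
  have hint : IntervalIntegrable (fun t : ℝ => (1 - t*r) ^ (-α)) volume 0 1 := by
    apply ContinuousOn.intervalIntegrable
    rwa [Set.uIcc_of_le zero_le_one]
  have hval := intervalIntegral.integral_eq_sub_of_hasDerivAt hderiv hint
  rw [← intervalIntegral.integral_of_le zero_le_one, hval]
  have h10 : (1 - (1:ℝ)*r) = 1 - r := by ring
  have h00 : (1 - (0:ℝ)*r) = 1 := by ring
  rw [h10, h00, Real.one_rpow]
  have hX : 0 ≤ (1-r) ^ (1-α) := Real.rpow_nonneg h1r.le _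
  have hd : 0 < r * (α - 1) := by nlinarith
  rw [div_sub_div_same, div_le_iff₀ hd]
  have hα1 : (α-1) ≠ 0 := ne_of_gt (by linarith)
  have he : 2/(α-1) * (1-r)^(1-α) * (r*(α-1)) = 2*r*(1-r)^(1-α) := by
    field_simp
  rw [he]
  nlinarith

lemma core (p α : ℝ) (hp : 1 ≤ p) (hα : 1 < α) (f g : ℂ → ℂ)
    (hf : DifferentiableOn ℂ f (ball (0:ℂ) 1))
    (B : ℝ) (hB0 : 0 ≤ B)
    (hB : ∀ s ∈ Set.Ico (0:ℝ) 1, (1 - s) ^ α * Mp p s f ≤ B)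
    (r : ℝ) (hr2 : 1/2 ≤ r) (hr1 : r < 1)
    (M : ℝ) (hM0 : 0 ≤ M)
    (hgM : ∀ θ : ℝ, ‖g ((r:ℂ) * Complex.exp (θ * Complex.I))‖ ≤ M) :
    Mp p r (fun z => g z * (z * ∫ t in (0:ℝ)..1, f ((t:ℂ) * z)))
      ≤ M * (B * (2/(α-1) * (1-r)^(1-α))) := by
  have hr0 : 0 < r := by linarith
  have h1r : 0 < 1 - r := by linarith
  have hp0 : 0 < p := by linarith
  have hπ : (0:ℝ) < 2*Real.pi := Real.two_pi_pos
  set A : Set ℝ := Set.Ioc (0:ℝ) (2*Real.pi) with hA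
  set T : Set ℝ := Set.Ioc (0:ℝ) 1 with hT
  haveI hfinA : IsFiniteMeasure (volume.restrict A) :=
    ⟨by rw [Measure.restrict_apply_univ]; simp [hA, Real.volume_Ioc, ENNReal.mul_lt_top ENNReal.ofNat_lt_top ENNReal.ofReal_lt_top]⟩
  have hz : ∀ θ : ℝ, ‖(r:ℂ) * Complex.exp (θ * Complex.I)‖ = r := by
    intro θ
    rw [norm_mul, Complex.norm_real, Real.norm_eq_abs, _root_.abs_of_nonneg hr0.le,
      Complex.norm_exp_ofReal_mul_I, mul_one]
  have hnz : ∀ (θ t : ℝ), t ∈ Set.Icc (0:ℝ) 1 →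
      ‖(t:ℂ) * ((r:ℂ) * Complex.exp (θ * Complex.I))‖ ≤ r := by
    intro θ t ht
    rw [norm_mul, hz θ, Complex.norm_real, Real.norm_eq_abs, _root_.abs_of_nonneg ht.1]
    nlinarith [ht.2]
  have hin : ∀ (θ t : ℝ), t ∈ Set.Icc (0:ℝ) 1 →
      (t:ℂ) * ((r:ℂ) * Complex.exp (θ * Complex.I)) ∈ ball (0:ℂ) 1 := by
    intro θ t ht
    rw [mem_ball_zero_iff]
    exact lt_of_le_of_lt (hnz θ t ht) hr1
  have hincb : ∀ (θ t : ℝ), t ∈ Set.Icc (0:ℝ) 1 →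
      (t:ℂ) * ((r:ℂ) * Complex.exp (θ * Complex.I)) ∈ closedBall (0:ℂ) r := by
    intro θ t ht
    rw [mem_closedBall_zero_iff]
    exact hnz θ t ht
  obtain ⟨S, hS⟩ := (isCompact_closedBall (0:ℂ) r).exists_bound_of_continuousOn
    (hf.continuousOn.mono (closedBall_subset_ball hr1))
  have hS0 : 0 ≤ S := (norm_nonneg (f 0)).trans (hS 0 (mem_closedBall_self hr0.le))
  have hβ0 : (0:ℝ) ≤ α*p - α := by nlinarith
  set F : ℝ → ℝ → ℝ := fun θ t =>
    ‖f ((t:ℂ) * ((r:ℂ) * Complex.exp (θ * Complex.I)))‖ ^ p * (1 - t*r) ^ (α*p - α) with hF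
  set c : ℝ := ∫ t in T, (1 - t*r) ^ (-α) with hc
  have hbase : ∀ t ∈ Set.Icc (0:ℝ) 1, 0 < 1 - t*r := by
    intro t ht; nlinarith [ht.1, ht.2]
  have hbase1 : ∀ t ∈ Set.Icc (0:ℝ) 1, 1 - t*r ≤ 1 := by
    intro t ht; nlinarith [ht.1]
  have hc0 : 0 ≤ c := setIntegral_nonneg measurableSet_Ioc
    (fun t ht => Real.rpow_nonneg (hbase t (Ioc_subset_Icc_self ht)).le _)
  have hwcont : ContinuousOn (fun t : ℝ => (1 - t*r) ^ (-α)) (Set.Icc (0:ℝ) 1) :=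
    (ContinuousOn.rpow_const
      ((continuous_const.sub (continuous_id.mul continuous_const)).continuousOn)
      (fun x hx => Or.inl (hbase x hx).ne'))
  -- continuity of F on univ ×ˢ Icc 0 1
  have hmapc : Continuous (fun q : ℝ×ℝ => (q.2:ℂ) * ((r:ℂ) * Complex.exp ((q.1:ℂ) * Complex.I))) := by
    apply Continuous.mul
    · exact Complex.continuous_ofReal.comp continuous_snd
    · exact continuous_const.mul (Complex.continuous_exp.comp
        ((Complex.continuous_ofReal.comp continuous_fst).mul continuous_const))
  have hfq : ContinuousOn (fun q : ℝ×ℝ => f ((q.2:ℂ) * ((r:ℂ) * Complex.exp ((q.1:ℂ) * Complex.I))))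
      ((Set.univ : Set ℝ) ×ˢ Set.Icc (0:ℝ) 1) := by
    apply hf.continuousOn.comp hmapc.continuousOn
    intro q hq
    exact hin q.1 q.2 hq.2
  have hFcont : ContinuousOn (Function.uncurry F)
      ((Set.univ : Set ℝ) ×ˢ Set.Icc (0:ℝ) 1) := by
    apply ContinuousOn.mul
    · exact hfq.norm.rpow_const (fun q hq => Or.inr hp0.le)
    · exact (ContinuousOn.rpow_const
        ((continuous_const.sub (continuous_snd.mul continuous_const)).continuousOn)
        (fun q hq => Or.inr hβ0))
  have hprodInt : Integrable (Function.uncurry F)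
      ((volume.restrict A).prod (volume.restrict T)) := by
    rw [Measure.prod_restrict]
    exact ((ContinuousOn.integrableOn_compact (isCompact_Icc.prod isCompact_Icc)
      (hFcont.mono (Set.prod_mono (subset_univ _) subset_rfl))).mono_set
      (Set.prod_mono Ioc_subset_Icc_self Ioc_subset_Icc_self))
  -- pointwise key inequality
  have key : ∀ θ : ℝ,
      ‖g ((r:ℂ) * Complex.exp (θ * Complex.I)) *
        (((r:ℂ) * Complex.exp (θ * Complex.I)) *
          ∫ t in (0:ℝ)..1, f ((t:ℂ) * ((r:ℂ) * Complex.exp (θ * Complex.I))))‖ ^ p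
      ≤ M^p * (c^(p-1) * ∫ t in T, F θ t) := by
    intro θ
    have hftc : ContinuousOn (fun t : ℝ => f ((t:ℂ) * ((r:ℂ) * Complex.exp (θ * Complex.I))))
        (Set.Icc (0:ℝ) 1) := by
      apply hf.continuousOn.comp
      · exact (Complex.continuous_ofReal.mul continuous_const).continuousOn
      · intro t ht; exact hin θ t ht
    have hncont : ContinuousOn (fun t : ℝ => ‖f ((t:ℂ) * ((r:ℂ) * Complex.exp (θ * Complex.I)))‖)
        (Set.Icc (0:ℝ) 1) := hftc.norm
    have hIN : 0 ≤ ∫ t in T, ‖f ((t:ℂ) * ((r:ℂ) * Complex.exp (θ * Complex.I)))‖ :=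
      setIntegral_nonneg measurableSet_Ioc (fun t _ => norm_nonneg _)
    have step1 : ‖((r:ℂ) * Complex.exp (θ * Complex.I)) *
        ∫ t in (0:ℝ)..1, f ((t:ℂ) * ((r:ℂ) * Complex.exp (θ * Complex.I)))‖
        ≤ ∫ t in T, ‖f ((t:ℂ) * ((r:ℂ) * Complex.exp (θ * Complex.I)))‖ := by
      rw [norm_mul, hz θ]
      have h2 := intervalIntegral.norm_integral_le_integral_norm
        (f := fun t : ℝ => f ((t:ℂ) * ((r:ℂ) * Complex.exp (θ * Complex.I))))
        (μ := volume) zero_le_one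
      beta_reduce at h2
      have h3 : (∫ t in (0:ℝ)..1, ‖f ((t:ℂ) * ((r:ℂ) * Complex.exp (θ * Complex.I)))‖)
          = ∫ t in T, ‖f ((t:ℂ) * ((r:ℂ) * Complex.exp (θ * Complex.I)))‖ :=
        intervalIntegral.integral_of_le zero_le_one
      rw [h3] at h2
      calc r * ‖∫ t in (0:ℝ)..1, f ((t:ℂ) * ((r:ℂ) * Complex.exp (θ * Complex.I)))‖
          ≤ 1 * ∫ t in T, ‖f ((t:ℂ) * ((r:ℂ) * Complex.exp (θ * Complex.I)))‖ :=
            mul_le_mul hr1.le h2 (norm_nonneg _) zero_le_one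
        _ = _ := one_mul _
    -- Jensen
    set u : ℝ → ℝ := fun t => ‖f ((t:ℂ) * ((r:ℂ) * Complex.exp (θ * Complex.I)))‖ * (1 - t*r)^α
      with hu
    set w : ℝ → ℝ := fun t => (1 - t*r)^(-α) with hw
    have hαpos : (0:ℝ) ≤ α := by linarith
    have hu_cont : ContinuousOn u T := by
      apply ContinuousOn.mul (hncont.mono Ioc_subset_Icc_self)
      exact (ContinuousOn.rpow_const
        ((continuous_const.sub (continuous_id.mul continuous_const)).continuousOn)
        (fun x hx => Or.inr hαpos)).mono Ioc_subset_Icc_self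
    have hw_cont : ContinuousOn w T := hwcont.mono Ioc_subset_Icc_self
    have hu0 : ∀ t ∈ T, 0 ≤ u t := fun t ht =>
      mul_nonneg (norm_nonneg _) (Real.rpow_nonneg (hbase t (Ioc_subset_Icc_self ht)).le _)
    have hw0 : ∀ t ∈ T, 0 < w t := fun t ht =>
      Real.rpow_pos_of_pos (hbase t (Ioc_subset_Icc_self ht)) _
    have huC : ∀ t ∈ T, u t ≤ S + (1-r)^(-α) := by
      intro t ht
      have hb := hbase t (Ioc_subset_Icc_self ht)
      have h1 : u t ≤ S * 1 := by
        apply mul_le_mul (hS _ (hincb θ t (Ioc_subset_Icc_self ht)))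
          (Real.rpow_le_one hb.le (hbase1 t (Ioc_subset_Icc_self ht)) hαpos)
          (Real.rpow_nonneg hb.le _) hS0
      have h2 : (0:ℝ) ≤ (1-r)^(-α) := Real.rpow_nonneg h1r.le _
      linarith
    have hwC : ∀ t ∈ T, w t ≤ S + (1-r)^(-α) := by
      intro t ht
      have hb := hbase t (Ioc_subset_Icc_self ht)
      have h1 : w t ≤ (1-r)^(-α) := by
        apply Real.rpow_le_rpow_of_nonpos h1r (by nlinarith [ht.1, ht.2, hr0]) (by linarith)
      linarith
    have jen := jensen_aux hp hu_cont hw_cont hu0 hw0 huC hwC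
    have euw : ∫ t in T, u t * w t
        = ∫ t in T, ‖f ((t:ℂ) * ((r:ℂ) * Complex.exp (θ * Complex.I)))‖ := by
      apply setIntegral_congr_fun measurableSet_Ioc
      intro t ht
      have hb := hbase t (Ioc_subset_Icc_self ht)
      simp only [hu, hw]
      rw [mul_assoc, ← Real.rpow_add hb]
      norm_num
    have eupw : ∫ t in T, u t ^ p * w t = ∫ t in T, F θ t := by
      apply setIntegral_congr_fun measurableSet_Ioc
      intro t ht
      have hb := hbase t (Ioc_subset_Icc_self ht)
      simp only [hu, hw, hF]
      rw [Real.mul_rpow (norm_nonneg _) (Real.rpow_nonneg hb.le _),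
        ← Real.rpow_mul hb.le, mul_assoc, ← Real.rpow_add hb, ← sub_eq_add_neg]
    rw [euw, eupw, ← hc] at jen
    rw [norm_mul, Real.mul_rpow (norm_nonneg _) (norm_nonneg _)]
    apply mul_le_mul (Real.rpow_le_rpow (norm_nonneg _) (hgM θ) hp0.le)
      (le_trans (Real.rpow_le_rpow (norm_nonneg _) step1 hp0.le) jen)
      (Real.rpow_nonneg (norm_nonneg _) _) (Real.rpow_nonneg hM0 _)
  -- integrability of θ ↦ ∫ t in T, F θ t
  have hbase_meas : AEStronglyMeasurable (fun θ => ∫ t in T, F θ t) (volume.restrict A) := by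
    have := hprodInt.1
    exact this.integral_prod_right'
  have hFbdd : ∀ θ : ℝ, ‖∫ t in T, F θ t‖ ≤ S^p := by
    intro θ
    have hTm : volume T < ⊤ := by rw [hT, Real.volume_Ioc]; exact ENNReal.ofReal_lt_top
    have hmeas : AEStronglyMeasurable (F θ) (volume.restrict T) := by
      have : ContinuousOn (F θ) (Set.Icc (0:ℝ) 1) := by
        apply ContinuousOn.mul
        · exact (ContinuousOn.norm (hf.continuousOn.comp
            ((Complex.continuous_ofReal.mul continuous_const).continuousOn)
            (fun t ht => hin θ t ht))).rpow_const (fun t ht => Or.inr hp0.le)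
        · exact (ContinuousOn.rpow_const
            ((continuous_const.sub (continuous_id.mul continuous_const)).continuousOn)
            (fun x hx => Or.inr hβ0))
      exact (this.mono Ioc_subset_Icc_self).aestronglyMeasurable measurableSet_Ioc
    have hbd : ∀ t ∈ T, ‖F θ t‖ ≤ S^p := by
      intro t ht
      have hb := hbase t (Ioc_subset_Icc_self ht)
      have hF0 : 0 ≤ F θ t :=
        mul_nonneg (Real.rpow_nonneg (norm_nonneg _) _) (Real.rpow_nonneg hb.le _)
      rw [Real.norm_eq_abs, _root_.abs_of_nonneg hF0]
      have h1 : ‖f ((t:ℂ) * ((r:ℂ) * Complex.exp (θ * Complex.I)))‖^p ≤ S^p :=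
        Real.rpow_le_rpow (norm_nonneg _) (hS _ (hincb θ t (Ioc_subset_Icc_self ht))) hp0.le
      have h2 : (1-t*r)^(α*p-α) ≤ 1 :=
        Real.rpow_le_one hb.le (hbase1 t (Ioc_subset_Icc_self ht)) hβ0
      calc F θ t ≤ S^p * 1 := mul_le_mul h1 h2 (Real.rpow_nonneg hb.le _) (Real.rpow_nonneg hS0 _)
        _ = S^p := mul_one _
    have := norm_setIntegral_le_of_norm_le_const (μ := volume) hTm hbd
    calc ‖∫ t in T, F θ t‖ ≤ S^p * (volume T).toReal := this
      _ = S^p := by rw [hT, Real.volume_Ioc]; norm_num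
  have hbase_int : Integrable (fun θ => ∫ t in T, F θ t) (volume.restrict A) :=
    Integrable.mono' (integrable_const (S^p)) hbase_meas (ae_of_all _ hFbdd)
  have htop_int : Integrable (fun θ => M^p * (c^(p-1) * ∫ t in T, F θ t)) (volume.restrict A) :=
    (hbase_int.const_mul _).const_mul _
  -- inner bound after swap
  have hinner : ∀ t ∈ T, (∫ θ in A, F θ t) ≤ 2*Real.pi * B^p * (1 - t*r)^(-α) := by
    intro t ht
    have hb := hbase t (Ioc_subset_Icc_self ht)
    have htr : t * r ∈ Set.Ico (0:ℝ) 1 := ⟨mul_nonneg ht.1.le hr0.le, by nlinarith [ht.2]⟩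
    have hrw : ∀ θ : ℝ, F θ t
        = ‖f (((t*r : ℝ):ℂ) * Complex.exp (θ * Complex.I))‖^p * (1 - t*r)^(α*p-α) := by
      intro θ
      simp only [hF]
      congr 3
      push_cast
      ring
    have e1 : (∫ θ in A, F θ t)
        = (∫ θ in A, ‖f (((t*r : ℝ):ℂ) * Complex.exp (θ * Complex.I))‖^p) * (1 - t*r)^(α*p-α) := by
      rw [setIntegral_congr_fun measurableSet_Ioc (fun θ _ => hrw θ)]
      exact integral_mul_const _ _
    set I : ℝ := ∫ θ in (0:ℝ)..(2*Real.pi), ‖f (((t*r : ℝ):ℂ) * Complex.exp (θ * Complex.I))‖^p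
      with hI
    have hI0 : 0 ≤ I := intervalIntegral.integral_nonneg hπ.le
      (fun θ _ => Real.rpow_nonneg (norm_nonneg _) _)
    have hIset : (∫ θ in A, ‖f (((t*r : ℝ):ℂ) * Complex.exp (θ * Complex.I))‖^p) = I := by
      rw [hI, intervalIntegral.integral_of_le hπ.le]
    have hMple : Mp p (t*r) f ≤ B * (1-t*r)^(-α) := by
      have h := hB (t*r) htr
      have hpow : 0 < (1 - t*r)^α := Real.rpow_pos_of_pos hb α
      have h2 : Mp p (t*r) f ≤ B / (1-t*r)^α := by
        rw [le_div_iff₀ hpow, mul_comm]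
        exact h
      rwa [div_eq_mul_inv, ← Real.rpow_neg hb.le] at h2
    have hMpdef : Mp p (t*r) f = ((1/(2*Real.pi)) * I)^(1/p) := rfl
    have hIeq : I = 2*Real.pi * (Mp p (t*r) f)^p := by
      rw [hMpdef, ← Real.rpow_mul (by positivity), one_div_mul_cancel hp0.ne', Real.rpow_one]
      field_simp
    have hIle : I ≤ 2*Real.pi * (B^p * (1-t*r)^(-(α*p))) := by
      rw [hIeq]
      have h3 : (Mp p (t*r) f)^p ≤ (B * (1-t*r)^(-α))^p :=
        Real.rpow_le_rpow (Mp_nonneg _ _ _) hMple hp0.le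
      have h4 : (B * (1-t*r)^(-α))^p = B^p * (1-t*r)^(-(α*p)) := by
        rw [Real.mul_rpow hB0 (Real.rpow_nonneg hb.le _), ← Real.rpow_mul hb.le, neg_mul]
      rw [h4] at h3
      nlinarith [hπ]
    rw [e1, hIset]
    calc I * (1-t*r)^(α*p-α) ≤ (2*Real.pi * (B^p * (1-t*r)^(-(α*p)))) * (1-t*r)^(α*p-α) :=
          mul_le_mul_of_nonneg_right hIle (Real.rpow_nonneg hb.le _)
      _ = 2*Real.pi * B^p * (1 - t*r)^(-α) := by
          rw [show (2*Real.pi * (B^p * (1-t*r)^(-(α*p)))) * (1-t*r)^(α*p-α)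
              = 2*Real.pi * B^p * ((1-t*r)^(-(α*p)) * (1-t*r)^(α*p-α)) from by ring,
            ← Real.rpow_add hb, show -(α*p)+(α*p-α) = -α from by ring]
  -- outer integral bound
  have houter : (∫ t in T, (∫ θ in A, F θ t)) ≤ 2*Real.pi * B^p * c := by
    have hcont2 : ContinuousOn (fun t : ℝ => 2*Real.pi * B^p * (1 - t*r)^(-α))
        (Set.Icc (0:ℝ) 1) := continuousOn_const.mul hwcont
    have htopi : IntegrableOn (fun t : ℝ => 2*Real.pi * B^p * (1 - t*r)^(-α)) T volume :=
      (hcont2.integrableOn_compact isCompact_Icc).mono_set Ioc_subset_Icc_self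
    have hlow : 0 ≤ᵐ[volume.restrict T] (fun t => ∫ θ in A, F θ t) := by
      refine (ae_restrict_iff' measurableSet_Ioc).2 (Eventually.of_forall ?_)
      intro t ht
      exact setIntegral_nonneg measurableSet_Ioc (fun θ _ =>
        mul_nonneg (Real.rpow_nonneg (norm_nonneg _) _)
          (Real.rpow_nonneg (hbase t (Ioc_subset_Icc_self ht)).le _))
    have hle : (fun t => ∫ θ in A, F θ t) ≤ᵐ[volume.restrict T]
        (fun t => 2*Real.pi * B^p * (1 - t*r)^(-α)) :=
      (ae_restrict_iff' measurableSet_Ioc).2 (Eventually.of_forall hinner)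
    calc (∫ t in T, (∫ θ in A, F θ t))
        ≤ ∫ t in T, 2*Real.pi * B^p * (1 - t*r)^(-α) :=
          integral_mono_of_nonneg hlow htopi hle
      _ = 2*Real.pi * B^p * c := by rw [hc]; exact integral_const_mul _ _
  -- main bound on J
  have hswap : (∫ θ in A, ∫ t in T, F θ t) = ∫ t in T, ∫ θ in A, F θ t :=
    integral_integral_swap hprodInt
  have hJ : (∫ θ in A, ‖g ((r:ℂ) * Complex.exp (θ * Complex.I)) *
        (((r:ℂ) * Complex.exp (θ * Complex.I)) *
          ∫ t in (0:ℝ)..1, f ((t:ℂ) * ((r:ℂ) * Complex.exp (θ * Complex.I))))‖ ^ p)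
      ≤ M^p * (c^(p-1) * (2*Real.pi * B^p * c)) := by
    have step := integral_mono_of_nonneg
      (ae_of_all _ (fun θ => Real.rpow_nonneg (norm_nonneg _) p)) htop_int (ae_of_all _ key)
    refine le_trans step ?_
    rw [integral_const_mul, integral_const_mul, hswap]
    have : (∫ t in T, ∫ θ in A, F θ t) ≤ 2*Real.pi * B^p * c := houter
    have hcp : (0:ℝ) ≤ c^(p-1) := Real.rpow_nonneg hc0 _
    have hMp' : (0:ℝ) ≤ M^p := Real.rpow_nonneg hM0 _
    exact mul_le_mul_of_nonneg_left (mul_le_mul_of_nonneg_left this hcp) hMp'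
  -- conclude
  have hcc : c^(p-1) * c = c^p := by
    calc c^(p-1) * c = c^(p-1) * c^(1:ℝ) := by rw [Real.rpow_one]
      _ = c^(p-1+1) := (Real.rpow_add' hc0 (by rw [sub_add_cancel]; exact hp0.ne')).symm
      _ = c^p := by rw [sub_add_cancel]
  have hWnn : (0:ℝ) ≤ (1 / (2 * Real.pi)) * ∫ θ in (0:ℝ)..(2*Real.pi),
      ‖g ((r:ℂ) * Complex.exp (θ * Complex.I)) *
        (((r:ℂ) * Complex.exp (θ * Complex.I)) *
          ∫ t in (0:ℝ)..1, f ((t:ℂ) * ((r:ℂ) * Complex.exp (θ * Complex.I))))‖ ^ p :=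
    mul_nonneg (by positivity) (intervalIntegral.integral_nonneg hπ.le
      (fun θ _ => Real.rpow_nonneg (norm_nonneg _) p))
  have hJ' : (∫ θ in (0:ℝ)..(2*Real.pi), ‖g ((r:ℂ) * Complex.exp (θ * Complex.I)) *
        (((r:ℂ) * Complex.exp (θ * Complex.I)) *
          ∫ t in (0:ℝ)..1, f ((t:ℂ) * ((r:ℂ) * Complex.exp (θ * Complex.I))))‖ ^ p)
      ≤ M^p * (c^(p-1) * (2*Real.pi * B^p * c)) := by
    rw [intervalIntegral.integral_of_le hπ.le]
    exact hJ
  have hE : (1/(2*Real.pi)) * (M^p * (c^(p-1) * (2*Real.pi * B^p * c)))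
      = M^p * (B^p * c^p) := by
    rw [← hcc]
    have hπne : (2*Real.pi) ≠ 0 := hπ.ne'
    field_simp
  calc Mp p r (fun z => g z * (z * ∫ t in (0:ℝ)..1, f ((t:ℂ) * z)))
      = ((1 / (2 * Real.pi)) * ∫ θ in (0:ℝ)..(2*Real.pi),
          ‖g ((r:ℂ) * Complex.exp (θ * Complex.I)) *
            (((r:ℂ) * Complex.exp (θ * Complex.I)) *
              ∫ t in (0:ℝ)..1, f ((t:ℂ) * ((r:ℂ) * Complex.exp (θ * Complex.I))))‖ ^ p) ^ (1/p) := rfl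
    _ ≤ ((1/(2*Real.pi)) * (M^p * (c^(p-1) * (2*Real.pi * B^p * c))))^(1/p) :=
        Real.rpow_le_rpow hWnn (mul_le_mul_of_nonneg_left hJ' (by positivity)) (by positivity)
    _ = (M^p * (B^p * c^p))^(1/p) := by rw [hE]
    _ = M * (B * c) := by
        rw [Real.mul_rpow (Real.rpow_nonneg hM0 _)
            (mul_nonneg (Real.rpow_nonneg hB0 _) (Real.rpow_nonneg hc0 _)),
          Real.mul_rpow (Real.rpow_nonneg hB0 _) (Real.rpow_nonneg hc0 _),
          ← Real.rpow_mul hM0, ← Real.rpow_mul hB0, ← Real.rpow_mul hc0,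
          mul_one_div_cancel hp0.ne', Real.rpow_one, Real.rpow_one, Real.rpow_one]
    _ ≤ M * (B * (2/(α-1) * (1-r)^(1-α))) := by
        have hcb : c ≤ 2/(α-1) * (1-r)^(1-α) := by
          rw [hc, hT]; exact weight_integral_le hα hr2 hr1
        exact mul_le_mul_of_nonneg_left (mul_le_mul_of_nonneg_left hcb hB0) hM0

/-- if `(1−|z|)|g(z)| → 0` as `|z| → 1`, then
`W_g f(z) = g(z)∫_0^z f(ζ)dζ` maps `H(p,∞,α)` into `H_0(p,∞,α)`:
for every `f` with `sup_r (1−r)^α M_p(r,f) < ∞`, one has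
`(1−r)^α M_p(r, W_g f) → 0` as `r → 1⁻`. -/
theorem stmt11 (p α : ℝ) (hp : 1 ≤ p) (hα : 1 < α)
    (g f : ℂ → ℂ)
    (hg : DifferentiableOn ℂ g (ball (0:ℂ) 1))
    (hf : DifferentiableOn ℂ f (ball (0:ℂ) 1))
    (hg0 : ∀ ε > (0:ℝ), ∃ R < (1:ℝ), ∀ z ∈ ball (0:ℂ) 1, R < ‖z‖ → (1 - ‖z‖) * ‖g z‖ < ε)
    (hfb : ∃ B, ∀ r ∈ Ico (0:ℝ) 1, (1 - r) ^ α * Mp p r f ≤ B) :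
    Tendsto (fun r => (1 - r) ^ α *
        Mp p r (fun z => g z * (z * ∫ t in (0:ℝ)..1, f ((t : ℂ) * z))))
      (nhdsWithin 1 (Iio 1)) (nhds 0) := by
  obtain ⟨B, hB⟩ := hfb
  have hp0 : 0 < p := by linarith
  have hB0 : 0 ≤ B := by
    have h0 := hB 0 ⟨le_refl 0, one_pos⟩
    have h1 : (0:ℝ) ≤ (1 - 0) ^ α * Mp p 0 f :=
      mul_nonneg (Real.rpow_nonneg (by norm_num) _) (Mp_nonneg _ _ _)
    linarith
  rw [Metric.tendsto_nhds]
  intro ε hε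
  set K : ℝ := B * (2/(α-1)) + 1 with hK
  have hK0 : 0 < K := by
    have h' : 0 ≤ B * (2/(α-1)) := mul_nonneg hB0 (div_nonneg (by norm_num) (by linarith))
    rw [hK]
    linarith
  set δ : ℝ := ε / (2*K) with hδ
  have hδ0 : 0 < δ := div_pos hε (by linarith)
  obtain ⟨R, hR1, hRg⟩ := hg0 δ hδ0
  set m : ℝ := max R (1/2) with hm
  have hm1 : m < 1 := by
    apply max_lt hR1
    norm_num
  have hmem : Set.Ioo m 1 ∈ nhdsWithin (1:ℝ) (Iio 1) := by
    rw [← Set.Ioi_inter_Iio]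
    exact inter_mem (mem_nhdsWithin_of_mem_nhds (Ioi_mem_nhds hm1)) self_mem_nhdsWithin
  filter_upwards [hmem] with r hr
  have hrm : m < r := hr.1
  have hr1 : r < 1 := hr.2
  have hr2 : 1/2 ≤ r := le_of_lt (lt_of_le_of_lt (le_max_right R (1/2)) hrm)
  have hrR : R < r := lt_of_le_of_lt (le_max_left R (1/2)) hrm
  have hr0 : 0 < r := by linarith
  have h1r : 0 < 1 - r := by linarith
  have hz : ∀ θ : ℝ, ‖(r:ℂ) * Complex.exp (θ * Complex.I)‖ = r := by
    intro θ
    rw [norm_mul, Complex.norm_real, Real.norm_eq_abs, _root_.abs_of_nonneg hr0.le,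
      Complex.norm_exp_ofReal_mul_I, mul_one]
  have hgM : ∀ θ : ℝ, ‖g ((r:ℂ) * Complex.exp (θ * Complex.I))‖ ≤ δ / (1-r) := by
    intro θ
    have hmem : (r:ℂ) * Complex.exp (θ * Complex.I) ∈ ball (0:ℂ) 1 := by
      rw [mem_ball_zero_iff, hz θ]; exact hr1
    have := hRg _ hmem (by rw [hz θ]; exact hrR)
    rw [hz θ] at this
    rw [le_div_iff₀ h1r, mul_comm]
    exact this.le
  have hcore := core p α hp hα f g hf B hB0 hB r hr2 hr1 (δ/(1-r))
    (div_nonneg hδ0.le h1r.le) hgM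
  have hval0 : 0 ≤ (1 - r) ^ α * Mp p r (fun z => g z * (z * ∫ t in (0:ℝ)..1, f ((t:ℂ) * z))) :=
    mul_nonneg (Real.rpow_nonneg h1r.le _) (Mp_nonneg _ _ _)
  rw [Real.dist_eq, sub_zero, _root_.abs_of_nonneg hval0]
  have hstep : (1 - r) ^ α * Mp p r (fun z => g z * (z * ∫ t in (0:ℝ)..1, f ((t:ℂ) * z)))
      ≤ (1 - r) ^ α * (δ/(1-r) * (B * (2/(α-1) * (1-r)^(1-α)))) :=
    mul_le_mul_of_nonneg_left hcore (Real.rpow_nonneg h1r.le _)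
  have hpow : (1-r)^α * (1-r)^(1-α) = 1 - r := by
    rw [← Real.rpow_add h1r, show α + (1-α) = 1 from by ring, Real.rpow_one]
  have hcollapse : (1 - r) ^ α * (δ/(1-r) * (B * (2/(α-1) * (1-r)^(1-α))))
      = δ * (B * (2/(α-1))) * ((1-r)^α * (1-r)^(1-α) / (1-r)) := by ring
  rw [hcollapse, hpow, div_self h1r.ne', mul_one] at hstep
  have hfin : δ * (B * (2/(α-1))) < ε := by
    have h1 : δ * (B * (2/(α-1))) ≤ δ * K := by
      apply mul_le_mul_of_nonneg_left _ hδ0.le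
      rw [hK]; linarith
    have h2 : δ * K = ε / 2 := by
      rw [hδ]; field_simp
    linarith
  exact lt_of_le_of_lt hstep hfin
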